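/- Let H be a symmetric numerical semigroup with e(H) < m(H). Then e(H) = m(H) − 1 if and only if H* is almost symmetric with t(H*) ≥ 2. -/

import Mathlib

/-- A numerical semigroup, viewed as a set of integers: a set of nonnegative
integers containing 0, closed under addition, with finite complement in ℕ. -/
def IsNumericalSemigroup (S : Set ℤ) : Prop :=
  (∀ x ∈ S, 0 ≤ x) ∧ 0 ∈ S ∧ (∀ a ∈ S, ∀ b ∈ S, a + b ∈ S) ∧
    {z : ℤ | 0 ≤ z ∧ z ∉ S}.Finite

/-- The genus: the number of nonnegative integers not in `S`. -/
noncomputable def genus (S : Set ℤ) : ℕ := {z : ℤ | 0 ≤ z ∧ z ∉ S}.ncard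

/-- The Frobenius number: the largest integer not in `S`. -/
noncomputable def frob (S : Set ℤ) : ℤ := sSup {z : ℤ | z ∉ S}

/-- The set of pseudo-Frobenius numbers. -/
def PF (S : Set ℤ) : Set ℤ := {x : ℤ | x ∉ S ∧ ∀ h ∈ S, h ≠ 0 → x + h ∈ S}

/-- The type: the number of pseudo-Frobenius numbers. -/
noncomputable def typ (S : Set ℤ) : ℕ := (PF S).ncard

/-- The multiplicity: the smallest nonzero element of `S`. -/
noncomputable def mult (S : Set ℤ) : ℤ := sInf {z : ℤ | z ∈ S ∧ z ≠ 0}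

/-- The Apéry set of `S` with respect to `n`. -/
def apery (S : Set ℤ) (n : ℤ) : Set ℤ := {s ∈ S | s - n ∉ S}

/-- The dual `H* = M - M` of the maximal ideal `M = S \ {0}`. -/
def dual (S : Set ℤ) : Set ℤ :=
  {z : ℤ | ∀ m ∈ S, m ≠ 0 → z + m ∈ S ∧ z + m ≠ 0}

/-- Almost symmetric: `2 g(S) = F(S) + t(S)`. -/
def AlmostSymmetric (S : Set ℤ) : Prop := 2 * (genus S : ℤ) = frob S + (typ S : ℤ)

/-- Symmetric: `2 g(S) = F(S) + 1`. -/
def SymmetricNS (S : Set ℤ) : Prop := 2 * (genus S : ℤ) = frob S + 1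

/-- Pseudo-symmetric: `2 g(S) = F(S) + 2`. -/
def PseudoSymmetric (S : Set ℤ) : Prop := 2 * (genus S : ℤ) = frob S + 2

/-- The set of minimal generators of `S`: nonzero elements not expressible as the
sum of two nonzero elements of `S`. -/
def minGens (S : Set ℤ) : Set ℤ :=
  {x ∈ S | x ≠ 0 ∧ ∀ a ∈ S, ∀ b ∈ S, a ≠ 0 → b ≠ 0 → x ≠ a + b}

/-- The embedding dimension: the number of minimal generators. -/
noncomputable def embdim (S : Set ℤ) : ℕ := (minGens S).ncard

/-- The gluing `⟨x S₁, y S₂⟩` of two numerical semigroups. -/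
def glue (x y : ℤ) (S₁ S₂ : Set ℤ) : Set ℤ :=
  {z : ℤ | ∃ a ∈ S₁, ∃ b ∈ S₂, z = x * a + y * b}

/-! For symmetric `S` with Frobenius number `F`, an integer `z` lies outside `S` exactly when
`F - z` lies in `S`. Hence `H* = S ∪ {F}`: its genus is `g - 1`, its Frobenius number is `F - m`,
and its pseudo-Frobenius numbers are the `F - s` for the minimal generators `s` of `S` (all below
`F` once `m ≥ 3`), so `t(H*) = e`. With `2g = F + 1`, almost symmetry `2(g - 1) = (F - m) + e` of
`H*` becomes `e = m - 1`, and `e ≥ 2` because `S ≠ ℕ`. -/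

open Set

namespace IsNumericalSemigroup

variable {S : Set ℤ} (hS : IsNumericalSemigroup S)
include hS

theorem nonneg {z : ℤ} (hz : z ∈ S) : 0 ≤ z := hS.1 z hz

theorem add_mem {a b : ℤ} (ha : a ∈ S) (hb : b ∈ S) : a + b ∈ S := hS.2.2.1 a ha b hb

theorem isGreatest_frob : IsGreatest {z | z ∉ S} (frob S) := by
  obtain ⟨t, ht⟩ := hS.2.2.2.bddAbove
  have hbdd : ∀ z, z ∉ S → z ≤ max t 0 := fun z hz => by
    rcases le_or_gt z 0 with h | h
    · exact h.trans (le_max_right _ _)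
    · exact (ht ⟨h.le, hz⟩).trans (le_max_left _ _)
  obtain ⟨F, hF, hmax⟩ := Int.exists_greatest_of_bdd (P := (· ∉ S)) ⟨_, hbdd⟩
    ⟨-1, fun h => absurd (hS.nonneg h) (by norm_num)⟩
  have hG : IsGreatest {z | z ∉ S} F := ⟨hF, hmax⟩
  rwa [frob, hG.csSup_eq]

theorem frob_not_mem : frob S ∉ S := hS.isGreatest_frob.1

theorem le_frob {z : ℤ} (hz : z ∉ S) : z ≤ frob S := hS.isGreatest_frob.2 hz

theorem mem_of_frob_lt {z : ℤ} (hz : frob S < z) : z ∈ S := by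
  by_contra h
  exact absurd (hS.le_frob h) (not_le.mpr hz)

theorem isLeast_mult : IsLeast {z | z ∈ S ∧ z ≠ 0} (mult S) := by
  have hF := hS.le_frob (z := -1) fun h => absurd (hS.nonneg h) (by norm_num)
  have hF2 : frob S + 2 ≠ 0 := by omega
  obtain ⟨m, hm, hmin⟩ := Int.exists_least_of_bdd (P := fun z => z ∈ S ∧ z ≠ 0)
    ⟨0, fun z hz => hS.nonneg hz.1⟩ ⟨frob S + 2, hS.mem_of_frob_lt (by omega), hF2⟩
  have hL : IsLeast {z | z ∈ S ∧ z ≠ 0} m := ⟨hm, hmin⟩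
  rwa [mult, hL.csInf_eq]

theorem mult_mem : mult S ∈ S := hS.isLeast_mult.1.1

theorem mult_ne_zero : mult S ≠ 0 := hS.isLeast_mult.1.2

theorem mult_le {z : ℤ} (hz : z ∈ S) (h0 : z ≠ 0) : mult S ≤ z :=
  hS.isLeast_mult.2 ⟨hz, h0⟩

theorem not_mem_of_pos_of_lt_mult {z : ℤ} (h0 : 0 < z) (hz : z < mult S) : z ∉ S :=
  fun h => absurd (hS.mult_le h h0.ne') (not_le.mpr hz)

theorem frob_sub_not_mem {z : ℤ} (hz : z ∈ S) : frob S - z ∉ S := fun h =>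
  hS.frob_not_mem (by simpa using hS.add_mem hz h)

theorem ncard_inter_Icc_add_genus :
    (S ∩ Icc 0 (frob S)).ncard + genus S = (frob S + 1).toNat := by
  have hgaps : Icc 0 (frob S) \ S = {z | 0 ≤ z ∧ z ∉ S} := by
    ext z
    exact ⟨fun h => ⟨h.1.1, h.2⟩, fun h => ⟨⟨h.1, hS.le_frob h.2⟩, h.2⟩⟩
  rw [genus, ← hgaps, inter_comm, ncard_inter_add_ncard_sdiff_eq_ncard _ _ (finite_Icc _ _),
    ← Finset.coe_Icc, ncard_coe_finset, Int.card_Icc, sub_zero]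

theorem genus_insert_add_one {z : ℤ} (hz0 : 0 ≤ z) (hz : z ∉ S) :
    genus (insert z S) + 1 = genus S := by
  have hgaps : {x | 0 ≤ x ∧ x ∉ insert z S} = {x | 0 ≤ x ∧ x ∉ S} \ {z} := by
    ext x
    simp only [mem_insert_iff, mem_ofPred_eq, mem_sdiff, mem_singleton_iff]
    tauto
  rw [genus, hgaps]
  exact ncard_sdiff_singleton_add_one ⟨hz0, hz⟩ hS.2.2.2

theorem sub_mult_not_mem_of_mem_minGens {s : ℤ} (hs : s ∈ minGens S) (hsm : s ≠ mult S) :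
    s - mult S ∉ S := fun h =>
  hs.2.2 _ hS.mult_mem _ h hS.mult_ne_zero (sub_ne_zero.mpr hsm) (by ring)

theorem mult_mem_minGens : mult S ∈ minGens S := by
  refine ⟨hS.mult_mem, hS.mult_ne_zero, fun a ha b hb ha0 hb0 hab => ?_⟩
  have := hS.mult_le ha ha0
  have := hS.mult_le hb hb0
  have := hS.nonneg ha
  omega

theorem minGens_finite : (minGens S).Finite := by
  refine ((finite_Icc 0 (frob S + mult S)).insert (mult S)).subset fun s hs => ?_
  by_cases hsm : s = mult S
  · exact .inl hsm
  · have := hS.le_frob (hS.sub_mult_not_mem_of_mem_minGens hs hsm)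
    exact .inr ⟨hS.nonneg hs.1, by omega⟩

theorem one_le_embdim : 1 ≤ embdim S :=
  (ncard_pos hS.minGens_finite).mpr ⟨_, hS.mult_mem_minGens⟩

theorem exists_isLeast_not_dvd {n : ℤ} (hn : ¬ n ∣ 1) :
    ∃ w, IsLeast {z | z ∈ S ∧ ¬ n ∣ z} w := by
  have hlarge : ∃ z, z ∈ S ∧ ¬ n ∣ z := by
    by_cases h : n ∣ frob S + 1
    · refine ⟨frob S + 2, hS.mem_of_frob_lt (by omega), fun h' => hn ?_⟩
      simpa using dvd_sub h' h
    · exact ⟨frob S + 1, hS.mem_of_frob_lt (by omega), h⟩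
  obtain ⟨w, hw⟩ := Int.exists_least_of_bdd ⟨0, fun z hz => hS.nonneg hz.1⟩ hlarge
  exact ⟨w, hw⟩

-- If `w = a + b`, one of the summands is not divisible by `n` and is smaller than `w`.
theorem mem_minGens_of_isLeast_not_dvd {n w : ℤ} (hw : IsLeast {z | z ∈ S ∧ ¬ n ∣ z} w) :
    w ∈ minGens S := by
  obtain ⟨⟨hwS, hwn⟩, hmin⟩ := hw
  refine ⟨hwS, fun h => hwn (h ▸ dvd_zero n), fun a ha b hb ha0 hb0 hab => ?_⟩
  have hapos : 0 < a := lt_of_le_of_ne (hS.nonneg ha) (Ne.symm ha0)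
  have hbpos : 0 < b := lt_of_le_of_ne (hS.nonneg hb) (Ne.symm hb0)
  by_cases hna : n ∣ a
  · have := hmin ⟨hb, fun hnb => hwn (hab ▸ dvd_add hna hnb)⟩
    omega
  · have := hmin ⟨ha, hna⟩
    omega

theorem two_le_embdim (hm : 2 ≤ mult S) : 2 ≤ embdim S := by
  have hm1 : ¬ mult S ∣ 1 := fun h => by have := Int.le_of_dvd one_pos h; omega
  obtain ⟨w, hw⟩ := hS.exists_isLeast_not_dvd hm1
  refine (one_lt_ncard hS.minGens_finite).mpr
    ⟨_, hS.mult_mem_minGens, w, hS.mem_minGens_of_isLeast_not_dvd hw, ?_⟩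
  rintro rfl
  exact hw.1.2 dvd_rfl

end IsNumericalSemigroup

namespace SymmetricNS

variable {S : Set ℤ} (hsym : SymmetricNS S) (hS : IsNumericalSemigroup S)
include hsym hS

-- `z ↦ F - z` injects `S ∩ [0, F]` into the `g` gaps, and `2g = F + 1` makes both sides
-- have `g` elements.
theorem frob_sub_mem_iff {z : ℤ} : frob S - z ∈ S ↔ z ∉ S := by
  refine ⟨fun h hz => hS.frob_sub_not_mem hz h, fun hz => ?_⟩
  rcases lt_or_ge z 0 with hneg | hz0
  · exact hS.mem_of_frob_lt (by omega)
  have hmaps : MapsTo (frob S - ·) (S ∩ Icc 0 (frob S)) {x | 0 ≤ x ∧ x ∉ S} :=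
    fun a ha => ⟨by simpa using ha.2.2, hS.frob_sub_not_mem ha.1⟩
  have himage : (frob S - ·) '' (S ∩ Icc 0 (frob S)) = {x | 0 ≤ x ∧ x ∉ S} := by
    refine eq_of_subset_of_ncard_le hmaps.image_subset ?_ hS.2.2.2
    have hcount := hS.ncard_inter_Icc_add_genus
    have h2g : 2 * (genus S : ℤ) = frob S + 1 := hsym
    rw [ncard_image_of_injective _ (sub_right_injective (b := frob S))]
    change genus S ≤ _
    omega
  have hzgap : z ∈ {x | 0 ≤ x ∧ x ∉ S} := ⟨hz0, hz⟩
  obtain ⟨a, ha, hza⟩ := himage ▸ hzgap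
  simpa [← hza] using ha.1

theorem dual_eq (hF : 0 ≤ frob S) : dual S = insert (frob S) S := by
  ext z
  constructor
  · intro hz
    by_contra hzT
    obtain ⟨hzF, hzS⟩ := not_or.mp hzT
    have hsub := (hsym.frob_sub_mem_iff hS).mpr hzS
    have := (hz _ hsub (sub_ne_zero.mpr (Ne.symm hzF))).1
    exact hS.frob_not_mem (by simpa using this)
  · intro hz h hh hh0
    have := hS.mult_le hh hh0
    have := hS.mult_ne_zero
    have := hS.nonneg hS.mult_mem
    rcases hz with rfl | hz
    · exact ⟨hS.mem_of_frob_lt (by omega), by omega⟩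
    · exact ⟨hS.add_mem hz hh, by have := hS.nonneg hz; omega⟩

theorem frob_insert_frob : frob (insert (frob S) S) = frob S - mult S := by
  refine IsGreatest.csSup_eq ⟨?_, fun z hz => ?_⟩
  · rintro (h | h)
    · exact hS.mult_ne_zero (by linarith)
    · exact hS.frob_sub_not_mem hS.mult_mem h
  · obtain ⟨hzF, hzS⟩ := not_or.mp hz
    have := hS.mult_le ((hsym.frob_sub_mem_iff hS).mpr hzS) (sub_ne_zero.mpr (Ne.symm hzF))
    omega

theorem frob_sub_mem_of_pos_of_lt_mult {z : ℤ} (h0 : 0 < z) (hz : z < mult S) :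
    frob S - z ∈ S :=
  (hsym.frob_sub_mem_iff hS).mpr (hS.not_mem_of_pos_of_lt_mult h0 hz)

theorem mult_lt_frob (hm : 3 ≤ mult S) : mult S < frob S := by
  have h1 := hsym.frob_sub_mem_of_pos_of_lt_mult hS one_pos (by omega)
  have h2 := hS.le_frob (hS.not_mem_of_pos_of_lt_mult two_pos (by omega))
  have := hS.mult_le h1 (by omega)
  omega

-- The least `w ∈ S` with `m ∤ w` lies below `F`, as `m` misses one of `F - 1, F - 2 ∈ S`;
-- then `w - m ∈ S` would undercut `w`.
theorem frob_add_mult_not_mem_minGens (hm : 3 ≤ mult S) : frob S + mult S ∉ minGens S := by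
  intro hgen
  have hm1 : ¬ mult S ∣ 1 := fun h => by have := Int.le_of_dvd one_pos h; omega
  obtain ⟨w, ⟨hwS, hwndvd⟩, hmin⟩ := hS.exists_isLeast_not_dvd hm1
  have hwF : w ≤ frob S := by
    have h1 := hsym.frob_sub_mem_of_pos_of_lt_mult hS one_pos (by omega)
    have h2 := hsym.frob_sub_mem_of_pos_of_lt_mult hS two_pos (by omega)
    by_cases hd : mult S ∣ frob S - 1
    · have := hmin ⟨h2, fun h => hm1 (by simpa using dvd_sub hd h)⟩
      omega
    · have := hmin ⟨h1, hd⟩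
      omega
  have hw0 : w ≠ 0 := fun h => hwndvd (h ▸ dvd_zero _)
  have hmw : mult S < w :=
    lt_of_le_of_ne (hS.mult_le hwS hw0) fun h => hwndvd (h ▸ dvd_rfl)
  have hrest : frob S + mult S - w ∉ S := fun h =>
    hgen.2.2 w hwS _ h hw0 (by omega) (by ring)
  have hwsub : w - mult S ∈ S := by
    simpa [sub_sub_eq_add_sub] using (hsym.frob_sub_mem_iff hS).mpr hrest
  have := hmin ⟨hwsub, fun h => hwndvd (by simpa using dvd_add h (dvd_refl (mult S)))⟩
  omega

theorem lt_frob_of_mem_minGens (hm : 3 ≤ mult S) {s : ℤ} (hs : s ∈ minGens S) :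
    s < frob S := by
  by_contra! hsF
  have hmF := hsym.mult_lt_frob hS hm
  have hsF' : s ≠ frob S := fun h => hS.frob_not_mem (h ▸ hs.1)
  have hsm := hS.sub_mult_not_mem_of_mem_minGens hs (by omega)
  have hFs := (hsym.frob_sub_mem_iff hS).mpr hsm
  have hFs0 : frob S - (s - mult S) = 0 := by
    by_contra h0
    have := hS.mult_le hFs h0
    omega
  exact hsym.frob_add_mult_not_mem_minGens hS hm (by convert hs using 1; omega)

theorem PF_insert_frob (hm : 3 ≤ mult S) :
    PF (insert (frob S) S) = (frob S - ·) '' minGens S := by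
  have hiff := fun z => hsym.frob_sub_mem_iff hS (z := z)
  ext x
  constructor
  · rintro ⟨hxT, hx⟩
    obtain ⟨hxF, hxS⟩ := not_or.mp hxT
    refine ⟨frob S - x, ⟨(hiff x).mpr hxS, sub_ne_zero.mpr (Ne.symm hxF),
      fun a ha b hb ha0 hb0 hab => ?_⟩, by simp⟩
    have hxa : x + a = frob S - b := by omega
    rcases hxa ▸ hx a (mem_insert_of_mem _ ha) ha0 with h | h
    · exact hb0 (by omega)
    · exact hS.frob_sub_not_mem hb h
  · rintro ⟨s, hs, rfl⟩
    refine ⟨?_, fun h hh hh0 => ?_⟩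
    · rintro (h | h)
      · exact hs.2.1 (sub_eq_self.mp h)
      · exact hS.frob_sub_not_mem hs.1 h
    rcases hh with rfl | hh
    · exact mem_insert_of_mem _ <|
        hS.mem_of_frob_lt (by linarith [hsym.lt_frob_of_mem_minGens hS hm hs])
    by_cases hhs : h = s
    · simp [hhs]
    · have hsh : s - h ∉ S := fun h' =>
        hs.2.2 h hh _ h' hh0 (sub_ne_zero.mpr (Ne.symm hhs)) (by ring)
      have hsum : frob S - s + h = frob S - (s - h) := by ring
      exact mem_insert_of_mem _ (hsum ▸ (hiff _).mpr hsh)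

theorem typ_insert_frob (hm : 3 ≤ mult S) : typ (insert (frob S) S) = embdim S := by
  rw [typ, hsym.PF_insert_frob hS hm, embdim,
    ncard_image_of_injective _ (sub_right_injective (b := frob S))]

end SymmetricNS

theorem stmt15 (S : Set ℤ) (hS : IsNumericalSemigroup S)
    (hsym : SymmetricNS S) (he : (embdim S : ℤ) < mult S) :
    (embdim S : ℤ) = mult S - 1 ↔ (AlmostSymmetric (dual S) ∧ 2 ≤ typ (dual S)) := by
  have hm2 : 2 ≤ mult S := by have := hS.one_le_embdim; omega
  have he2 := hS.two_le_embdim hm2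
  have hm3 : 3 ≤ mult S := by omega
  have hF : 0 ≤ frob S := by
    have := hS.le_frob (hS.not_mem_of_pos_of_lt_mult one_pos (by omega))
    omega
  have hg := hS.genus_insert_add_one hF hS.frob_not_mem
  have h2g : 2 * (genus S : ℤ) = frob S + 1 := hsym
  rw [AlmostSymmetric, hsym.dual_eq hS hF, hsym.frob_insert_frob hS, hsym.typ_insert_frob hS hm3]
  omega
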